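/- Define T(n) = Σ_{j=0}^{2n} (-3)ʲ · C(3n-j, n) for nonnegative integers n. Then for every nonnegative integer n, -27·T(n) + 4·T(n+1) = -3 · (3n+1)! / ((2n+1)! · (n+1)!), where the identity is stated in the rationals ℚ. -/

import Mathlib

/-!
Substituting `k = 2n - j` gives `T n = ∑_{k ≤ 2n} (-3)^(2n-k) C(n+k, n)`. Zeilberger's algorithm
produces a certificate `G n k`, a rational function of `n, k` times the summand, for which
`-27 F(n,k) + 4 F(n+1,k+2) = G n (k+1) - G n k`, where `F(n,k)` is the `k`-th summand of `T n`.
Summing over `k ≤ 2n` telescopes to `G n (2n+1) - G n 0`; the two terms `k = 0, 1` of `T (n+1)`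
left over by the shift cancel `G n 0`, and `G n (2n+1)` is the right-hand side.
-/

open Finset

section Binomial

variable {R : Type*} [CommSemiring R]

theorem sum_pow_mul_choose_sub_reflect (x : R) {n m N : ℕ} (h : n + m = N) :
    ∑ j ∈ range (m + 1), x ^ j * ((N - j).choose n : R) =
      ∑ k ∈ range (m + 1), x ^ (m - k) * ((n + k).choose n : R) := by
  rw [← sum_range_reflect]
  refine sum_congr rfl fun k hk => ?_
  rw [mem_range] at hk
  rw [show m + 1 - 1 - k = m - k by omega, show N - (m - k) = n + k by omega]

theorem sum_range_add_two_pow_mul_choose (x : R) (n m : ℕ) :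
    ∑ k ∈ range (m + 2 + 1), x ^ (m + 2 - k) * ((n + 1 + k).choose (n + 1) : R) =
      x ^ (m + 2) + x ^ (m + 1) * (n + 2) +
        ∑ k ∈ range (m + 1), x ^ (m - k) * ((n + k + 3).choose (n + 1) : R) := by
  rw [sum_range_succ', sum_range_succ']
  simp only [show ∀ k, m + 2 - (k + 1 + 1) = m - k by omega,
    show ∀ k, n + 1 + (k + 1 + 1) = n + k + 3 by omega, zero_add, add_zero, Nat.sub_zero,
    Nat.choose_self, Nat.choose_succ_self_right]
  push_cast
  ring

end Binomial

theorem Nat.choose_add_succ_mul (n k : ℕ) :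
    (n + k + 1).choose n * (k + 1) = (n + k).choose n * (n + k + 1) := by
  rw [Nat.choose_mul_succ_eq, show n + k + 1 - n = k + 1 by omega]

theorem Nat.choose_add_three_succ_mul (n k : ℕ) :
    (n + k + 3).choose (n + 1) * ((n + 1) * (k + 1) * (k + 2)) =
      (n + k).choose n * ((n + k + 1) * (n + k + 2) * (n + k + 3)) := by
  have h₁ := Nat.choose_add_succ_mul n k
  have h₂ : (n + k + 2).choose n * (k + 2) = (n + k + 1).choose n * (n + k + 2) :=
    Nat.choose_add_succ_mul n (k + 1)
  have h₃ := Nat.add_one_mul_choose_eq (n + k + 2) n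
  calc (n + k + 3).choose (n + 1) * ((n + 1) * (k + 1) * (k + 2))
      = (n + k + 3) * (n + k + 2).choose n * (k + 2) * (k + 1) := by rw [h₃]; ring
    _ = (n + k + 3) * (n + k + 2) * ((n + k + 1).choose n * (k + 1)) := by
        rw [mul_assoc _ _ (k + 2), h₂]; ring
    _ = (n + k).choose n * ((n + k + 1) * (n + k + 2) * (n + k + 3)) := by rw [h₁]; ring

noncomputable def ruehrCertificate (n k : ℕ) : ℚ :=
  (-3) ^ (2 * n + 2 - k) *
    (-3 * k ^ 3 + (12 * n + 3) * k ^ 2 + (-12 * n ^ 2 + 24 * n + 30) * k + 24 - 24 * n ^ 2) *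
      (n + k).choose n / (9 * (n + 1) * (k + 1) * (k + 2))

theorem ruehrCertificate_succ_sub (n k : ℕ) (hk : k ≤ 2 * n) :
    ruehrCertificate n (k + 1) - ruehrCertificate n k =
      -27 * ((-3) ^ (2 * n - k) * (n + k).choose n) +
        4 * ((-3) ^ (2 * n - k) * (n + k + 3).choose (n + 1)) := by
  have h₁ : ((n + (k + 1)).choose n : ℚ) = (n + k).choose n * (n + k + 1) / (k + 1) := by
    rw [eq_div_iff (by positivity), ← add_assoc]
    exact_mod_cast Nat.choose_add_succ_mul n k
  have h₂ : ((n + k + 3).choose (n + 1) : ℚ) =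
      (n + k).choose n * ((n + k + 1) * (n + k + 2) * (n + k + 3)) /
        ((n + 1) * (k + 1) * (k + 2)) := by
    rw [eq_div_iff (by positivity)]
    exact_mod_cast Nat.choose_add_three_succ_mul n k
  unfold ruehrCertificate
  rw [show 2 * n + 2 - (k + 1) = 2 * n - k + 1 by omega, show 2 * n + 2 - k = 2 * n - k + 2 by omega,
    h₁, h₂]
  field_simp
  push_cast
  ring

theorem ruehrCertificate_zero (n : ℕ) : ruehrCertificate n 0 = 12 * (1 - n) * (-3) ^ (2 * n) := by
  unfold ruehrCertificate
  rw [add_zero, Nat.choose_self]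
  field_simp
  push_cast
  ring

theorem ruehrCertificate_top (n : ℕ) :
    ruehrCertificate n (2 * n + 1) =
      -3 * ((3 * n + 1).factorial : ℚ) / (((2 * n + 1).factorial : ℚ) * ((n + 1).factorial : ℚ)) := by
  have hchoose : ((n + (2 * n + 1)).choose n : ℚ) =
      (3 * n + 1).factorial / (n.factorial * (2 * n + 1).factorial) := by
    rw [Nat.cast_add_choose, show n + (2 * n + 1) = 3 * n + 1 by ring]
  unfold ruehrCertificate
  rw [show 2 * n + 2 - (2 * n + 1) = 1 by omega, hchoose, Nat.factorial_succ n]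
  field_simp
  push_cast
  ring

theorem ruehr_T_recurrence (T : ℕ → ℚ)
    (hT : ∀ n : ℕ, T n = ∑ j ∈ Finset.range (2 * n + 1), (-3 : ℚ) ^ j * (Nat.choose (3 * n - j) n : ℚ)) :
    ∀ n : ℕ, -27 * T n + 4 * T (n + 1) =
      -3 * (Nat.factorial (3 * n + 1) : ℚ) /
        ((Nat.factorial (2 * n + 1) : ℚ) * (Nat.factorial (n + 1) : ℚ)) := by
  intro n
  have hTn : T n = ∑ k ∈ range (2 * n + 1), (-3 : ℚ) ^ (2 * n - k) * ((n + k).choose n : ℚ) := by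
    rw [hT, sum_pow_mul_choose_sub_reflect _ (by ring)]
  have hTsucc : T (n + 1) = (-3 : ℚ) ^ (2 * n + 2) + (-3) ^ (2 * n + 1) * (n + 2) +
      ∑ k ∈ range (2 * n + 1), (-3 : ℚ) ^ (2 * n - k) * ((n + k + 3).choose (n + 1) : ℚ) := by
    rw [hT, sum_pow_mul_choose_sub_reflect _ (by ring), show 2 * (n + 1) = 2 * n + 2 by ring,
      sum_range_add_two_pow_mul_choose]
  have htelescope := sum_range_sub (ruehrCertificate n) (2 * n + 1)
  rw [sum_congr rfl fun k hk => ruehrCertificate_succ_sub n k (Nat.lt_succ_iff.mp (mem_range.mp hk)),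
    sum_add_distrib, ← mul_sum, ← mul_sum, ruehrCertificate_top, ruehrCertificate_zero] at htelescope
  rw [hTn, hTsucc]
  linear_combination htelescope
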